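/- arXiv:2601.23070 — 11 statements merged into one kernel-verified Lean document; each statement's English description precedes it below -/
import Mathlib

section
/- If α is a plump ordinal and β ∈ α, then β is plump relative to α, i.e. for all δ ∈ β and all ε ∈ α with ε ⊆ δ, we have ε ∈ β. -/
/-- An ordinal: a transitive set of transitive sets. -/
def ZFSet.IsOrd (x : ZFSet) : Prop :=
  x.IsTransitive ∧ ∀ y ∈ x, ZFSet.IsTransitive y

/-- `γ` is plump relative to `α`: for all `δ ∈ γ` and `ε ∈ α` with `ε ⊆ δ`, `ε ∈ γ`. -/
def ZFSet.relpl (α γ : ZFSet) : Prop :=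
  ∀ δ ∈ γ, ∀ ε ∈ α, ε ⊆ δ → ε ∈ γ

/-- `α` is a plump ordinal. -/
def ZFSet.PlOrd (α : ZFSet) : Prop :=
  α.IsOrd ∧ ∀ β ∈ α, ∀ γ : ZFSet, γ ⊆ β → α.relpl γ →
    γ ∈ α ∧ ∀ δ ∈ α, β ∈ δ → γ ∈ δ

lemma plOrd_aux (α : ZFSet) (hα : α.PlOrd) :
    ∀ δ : ZFSet, ∀ ε ∈ α, ε ⊆ δ → ∀ β ∈ α, δ ∈ β → ε ∈ β := by
  intro δ
  induction δ using ZFSet.inductionOn with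
  | _ δ IH =>
    intro ε hε hεδ β hβ hδβ
    have hδα : δ ∈ α := hα.1.1 β hβ hδβ
    have hrel : α.relpl ε := by
      intro δ₀ hδ₀ ε₀ hε₀ hsub
      exact IH δ₀ (hεδ hδ₀) ε₀ hε₀ hsub ε hε hδ₀
    exact (hα.2 δ hδα ε hεδ hrel).2 β hβ hδβ

theorem plOrd_mem_relpl (α β : ZFSet) (hα : α.PlOrd) (hβ : β ∈ α) :
    α.relpl β := by
  intro δ hδ ε hε hsub
  exact plOrd_aux α hα δ ε hε hsub β hβ hδ
end

section
/- If α is a plump ordinal, β ⊆ α, and β is plump relative to α, then β is a plump ordinal. -/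
theorem plOrd_subset_relpl_plOrd (α β : ZFSet) (hα : α.PlOrd) (hβ : β ⊆ α)
    (hrel : α.relpl β) : β.PlOrd := by
  obtain ⟨⟨htrans, helem⟩, hpl⟩ := hα
  have hβtrans : β.IsTransitive := by
    intro y hy z hz
    exact hrel y hy z (htrans y (hβ hy) hz) (helem y (hβ hy) z hz)
  refine ⟨⟨hβtrans, fun y hy => helem y (hβ hy)⟩, ?_⟩
  intro b hb γ hγ hrelγ
  have hrelα : α.relpl γ := by
    intro δ hδ ε hε hsub
    have hδβ : δ ∈ β := hβtrans b hb (hγ hδ)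
    exact hrelγ δ hδ ε (hrel δ hδβ ε hε hsub) hsub
  obtain ⟨hγα, hδ⟩ := hpl b (hβ hb) γ hγ hrelα
  exact ⟨hrel b hb γ hγα hγ, fun δ hδβ => hδ δ (hβ hδβ)⟩
end

section
/- The class of plump ordinals is transitive: if α is a plump ordinal and β ∈ α, then β is a plump ordinal. -/
theorem plOrd_transitive (α β : ZFSet) (hα : α.PlOrd) (hβ : β ∈ α) : β.PlOrd := by
  obtain ⟨⟨htα, htmem⟩, hpl⟩ := hα
  -- Key lemma: every ζ ∈ α with ζ ⊆ x is relatively plump w.r.t. α (by ∈-induction on x)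
  have key : ∀ x : ZFSet, ∀ ζ ∈ α, ζ ⊆ x → α.relpl ζ := by
    intro x
    induction x using WellFounded.induction ZFSet.mem_wf with
    | _ x ih =>
      intro ζ hζα hζx δ hδζ η hηα hης
      have hδx : δ ∈ x := hζx hδζ
      have hδα : δ ∈ α := htα.mem_trans hδζ hζα
      have hrel : α.relpl η := ih δ hδx η hηα hης
      exact (hpl δ hδα η hης hrel).2 ζ hζα hδζ
  have relpl_of_mem : ∀ ζ ∈ α, α.relpl ζ := fun ζ hζ => key ζ ζ hζ (fun _ h => h)
  have hβsub : β ⊆ α := htα.subset_of_mem hβ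
  have htβ : β.IsTransitive := htmem β hβ
  refine ⟨⟨htβ, fun y hy => htmem y (hβsub hy)⟩, ?_⟩
  intro β' hβ' γ hγ hrelβ
  have hβ'α : β' ∈ α := hβsub hβ'
  have hrelα : α.relpl γ := by
    intro δ hδγ ε hεα hεδ
    have hδβ' : δ ∈ β' := hγ hδγ
    have hδα : δ ∈ α := htα.mem_trans hδβ' hβ'α
    have hεβ' : ε ∈ β' := (hpl δ hδα ε hεδ (relpl_of_mem ε hεα)).2 β' hβ'α hδβ'
    exact hrelβ δ hδγ ε (htβ.mem_trans hεβ' hβ') hεδ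
  obtain ⟨-, h2⟩ := hpl β' hβ'α γ hγ hrelα
  exact ⟨h2 β hβ hβ', fun δ hδβ hβ'δ => h2 δ (hβsub hδβ) hβ'δ⟩
end

section
/- If α and β are both plump ordinals with β ⊆ α, then β is plump relative to α. -/
private lemma plOrd_relpl_mem_aux (α : ZFSet) (hα : α.PlOrd) :
    ∀ o : Ordinal, ∀ ε : ZFSet, ε.rank ≤ o → ε ∈ α → α.relpl ε := by
  intro o
  induction o using Ordinal.induction with
  | h o IH =>
    intro ε hrank hε ζ hζ η hη hsubη
    have hζα : ζ ∈ α := hα.1.1.mem_trans hζ hε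
    have hrζ : ζ.rank < o := lt_of_lt_of_le (ZFSet.rank_lt_of_mem hζ) hrank
    have hrel : α.relpl η := IH ζ.rank hrζ η (ZFSet.rank_mono hsubη) hη
    obtain ⟨_, hmem⟩ := hα.2 ζ hζα η hsubη hrel
    exact hmem ε hε hζ

theorem subset_plOrd_relpl (α β : ZFSet) (hα : α.PlOrd) (hβ : β.PlOrd)
    (hsub : β ⊆ α) : α.relpl β := by
  intro δ hδ ε hε hεδ
  have hrelα : α.relpl ε := plOrd_relpl_mem_aux α hα ε.rank ε le_rfl hε
  have hrelβ : β.relpl ε := fun ζ hζ η hη h => hrelα ζ hζ η (hsub hη) h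
  exact (hβ.2 δ hδ ε hεδ hrelβ).1
end

section
/- Plump ordinals are closed downward under plump subsets: if α and γ are plump ordinals and γ ⊆ β for some β ∈ α, then γ ∈ α. -/
theorem plOrd_closed_under_plOrd_subset (α γ : ZFSet) (hα : α.PlOrd) (hγ : γ.PlOrd)
    (β : ZFSet) (hβ : β ∈ α) (hsub : γ ⊆ β) : γ ∈ α := by
  -- Key lemma: every element of γ is plump relative to α, by rank induction.
  have L : ∀ e ∈ γ, α.relpl e := by
    have key : ∀ o : Ordinal, ∀ e : ZFSet, e.rank = o → e ∈ γ → α.relpl e := by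
      intro o
      induction o using Ordinal.induction with
      | h o IH =>
        rintro e rfl he d hd ε hεα hεd
        have hdγ : d ∈ γ := hγ.1.1 e he hd
        have hγrel : γ.relpl ε := by
          intro d' hd' e' he' hs
          have hd'α : d' ∈ α := hα.1.1 ε hεα hd'
          have hlt : e'.rank < e.rank :=
            lt_of_le_of_lt (ZFSet.rank_mono hs)
              (lt_of_lt_of_le (ZFSet.rank_lt_of_mem hd')
                ((ZFSet.rank_mono hεd).trans (ZFSet.rank_lt_of_mem hd).le))
          have hrel' : α.relpl e' := IH e'.rank hlt e' rfl he'
          exact (hα.2 d' hd'α e' hs hrel').2 ε hεα hd'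
        exact (hγ.2 d hdγ ε hεd hγrel).2 e he hd
    exact fun e he => key e.rank e rfl he
  have hrel : α.relpl γ := by
    intro δ hδ ε hεα hεδ
    have hγrelε : γ.relpl ε := by
      intro d' hd' e' he' hs
      have hd'α : d' ∈ α := hα.1.1 ε hεα hd'
      exact (hα.2 d' hd'α e' hs (L e' he')).2 ε hεα hd'
    exact (hγ.2 δ hδ ε hεδ hγrelε).1
  exact (hα.2 β hβ γ hsub hrel).1
end

section
/- A set x is a plump ordinal provided: (1) every element of x is a plump ordinal, and (2) for every plump ordinal γ, if γ ⊆ β for some β ∈ x, then γ ∈ x. -/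
/-- Every element of a plump ordinal is plump relative to it. -/
lemma relpl_of_mem (α : ZFSet) (hα : α.PlOrd) : ∀ ε ∈ α, α.relpl ε := by
  suffices H : ∀ o : Ordinal, ∀ ε : ZFSet, ε.rank < o → ε ∈ α → α.relpl ε by
    intro ε hε
    exact H (ε.rank + 1) ε (lt_add_one _) hε
  intro o
  induction o using Ordinal.induction with
  | h o IH =>
    intro ε hro hε d hd ε' hε' hsub
    have hdα : d ∈ α := hα.1.1.mem_trans hd hε
    have hrel : α.relpl ε' :=
      IH ε.rank hro ε' ((ZFSet.rank_mono hsub).trans_lt (ZFSet.rank_lt_of_mem hd)) hε'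
    exact (hα.2 d hdα ε' hsub hrel).2 ε hε hd

/-- Every element of a plump ordinal is a plump ordinal. -/
lemma plOrd_of_mem (α : ZFSet) (hα : α.PlOrd) {β : ZFSet} (hβ : β ∈ α) : β.PlOrd := by
  have htα : α.IsTransitive := hα.1.1
  have htβ : β.IsTransitive := hα.1.2 β hβ
  refine ⟨⟨htβ, fun δ hδ => hα.1.2 δ (htα.mem_trans hδ hβ)⟩, ?_⟩
  intro β' hβ' γ hγβ' hrel
  have hβ'α : β' ∈ α := htα.mem_trans hβ' hβ
  have hrelα : α.relpl γ := by
    intro d hd ε hε hεd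
    have hdβ' : d ∈ β' := hγβ' hd
    have hdβ : d ∈ β := htβ.mem_trans hdβ' hβ'
    have hdα : d ∈ α := htα.mem_trans hdβ hβ
    have : ε ∈ β := (hα.2 d hdα ε hεd (relpl_of_mem α hα ε hε)).2 β hβ hdβ
    exact hrel d hd ε this hεd
  obtain ⟨h1, h2⟩ := hα.2 β' hβ'α γ hγβ' hrelα
  exact ⟨h2 β hβ hβ', fun δ hδ hβ'δ => h2 δ (htα.mem_trans hδ hβ) hβ'δ⟩

theorem plOrd_crit (x : ZFSet)
    (h₁ : ∀ β ∈ x, ZFSet.PlOrd β)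
    (h₂ : ∀ γ : ZFSet, γ.PlOrd → ∀ β ∈ x, γ ⊆ β → γ ∈ x) :
    x.PlOrd := by
  have htx : x.IsTransitive := by
    intro β hβ δ hδ
    have hβp := h₁ β hβ
    exact h₂ δ (plOrd_of_mem β hβp hδ) β hβ (hβp.1.1.subset_of_mem hδ)
  refine ⟨⟨htx, fun β hβ => (h₁ β hβ).1.1⟩, ?_⟩
  intro β hβ γ hγβ hrel
  have hβp := h₁ β hβ
  have htβ : β.IsTransitive := hβp.1.1
  -- γ is transitive
  have htγ : γ.IsTransitive := by
    intro d hd e he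
    have hdβ : d ∈ β := hγβ hd
    have heβ : e ∈ β := htβ.mem_trans he hdβ
    have hex : e ∈ x := htx.mem_trans heβ hβ
    have hed : e ⊆ d := (plOrd_of_mem β hβp hdβ).1.1.subset_of_mem he
    exact hrel d hd e hex hed
  -- γ is a plump ordinal
  have hγp : γ.PlOrd := by
    refine ⟨⟨htγ, fun d hd => (plOrd_of_mem β hβp (hγβ hd)).1.1⟩, ?_⟩
    intro β' hβ' γ' hγ' hrelγ
    have hβ'β : β' ∈ β := hγβ hβ'
    have hrelβ : β.relpl γ' := by
      intro c hc ε hε hεc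
      have hcβ' : c ∈ β' := hγ' hc
      have hcγ : c ∈ γ := htγ.mem_trans hcβ' hβ'
      have hεx : ε ∈ x := htx.mem_trans hε hβ
      have hεγ : ε ∈ γ := hrel c hcγ ε hεx hεc
      exact hrelγ c hc ε hεγ hεc
    obtain ⟨hg1, hg2⟩ := hβp.2 β' hβ'β γ' hγ' hrelβ
    have hγ'x : x.relpl γ → γ' ∈ γ := fun _ =>
      hrel β' hβ' γ' (htx.mem_trans hg1 hβ) hγ'
    exact ⟨hγ'x hrel, fun δ hδ hβ'δ => hg2 δ (hγβ hδ) hβ'δ⟩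
  refine ⟨h₂ γ hγp β hβ hγβ, ?_⟩
  intro δ hδ hβδ
  have hδp := h₁ δ hδ
  have hrelδ : δ.relpl γ := by
    intro c hc ε hε hεc
    exact hrel c hc ε (htx.mem_trans hε hδ) hεc
  exact (hδp.2 β hβδ γ hγβ hrelδ).1
end

section
/- For any plump ordinal α and any subset β ⊆ α, β is a plump ordinal if and only if β is plump relative to α (a Δ₀ condition). -/
/-- Every member of a plump ordinal is plump relative to it. -/
theorem aux_mem_relpl (α : ZFSet) (hα : α.PlOrd) :
    ∀ o : Ordinal, ∀ ε : ZFSet, ε.rank < o → ε ∈ α → α.relpl ε := by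
  intro o
  induction o using Ordinal.induction with
  | h o IH =>
    intro ε hr hε δ hδ ε' hε' hsub
    have hδα : δ ∈ α := hα.1.1.mem_trans hδ hε
    have hrel : α.relpl ε' := by
      refine IH ε.rank hr ε' ?_ hε'
      exact (ZFSet.rank_mono hsub).trans_lt (ZFSet.rank_lt_of_mem hδ)
    exact (hα.2 δ hδα ε' hsub hrel).2 ε hε hδ

theorem mem_relpl (α : ZFSet) (hα : α.PlOrd) {ε : ZFSet} (hε : ε ∈ α) : α.relpl ε :=
  aux_mem_relpl α hα (Order.succ ε.rank) ε (Order.lt_succ _) hε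

theorem plOrd_iff_relpl (α β : ZFSet) (hα : α.PlOrd) (hβ : β ⊆ α) :
    β.PlOrd ↔ α.relpl β := by
  constructor
  · intro hβpl δ hδ ε hε hsub
    have hrel : β.relpl ε := fun x hx y hy hyx => mem_relpl α hα hε x hx y (hβ hy) hyx
    exact (hβpl.2 δ hδ ε hsub hrel).1
  · intro hrel
    have htrans : β.IsTransitive := by
      intro x hx y hy
      have hxα : x ∈ α := hβ hx
      have hyα : y ∈ α := hα.1.1.mem_trans hy hxα
      exact hrel x hx y hyα (hα.1.2 x hxα y hy)
    refine ⟨⟨htrans, fun y hy => hα.1.2 y (hβ hy)⟩, ?_⟩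
    intro b hb γ hγ hγrel
    have hbα : b ∈ α := hβ hb
    have hrelα : α.relpl γ := by
      intro x hx y hy hyx
      have hyb : y ∈ b := mem_relpl α hα hbα x (hγ hx) y hy hyx
      exact hγrel x hx y (htrans b hb hyb) hyx
    obtain ⟨h1, h2⟩ := hα.2 b hbα γ hγ hrelα
    exact ⟨hrel b hb γ h1 hγ, fun δ hδ hbδ => h2 δ (hβ hδ) hbδ⟩
end

section
/- The union of any set of plump ordinals is a plump ordinal. -/
/-!
Relative plumpness `α.relpl γ` only gets weaker as `α` shrinks, so a set that is plump relative
to `⋃₀ s` is plump relative to every `α ∈ s`. The plumpness clauses for `β ∈ ⋃₀ s` can therefore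
be checked inside a single `α ∈ s`: one containing `β` for `γ ∈ ⋃₀ s`, and, for `β ∈ δ ∈ ⋃₀ s`,
one containing `δ`, which contains `β` as well by transitivity.
-/

namespace ZFSet

theorem relpl.mono {α α' γ : ZFSet} (h : α ⊆ α') (hγ : α'.relpl γ) : α.relpl γ :=
  fun δ hδ ε hε hεδ => hγ δ hδ ε (h hε) hεδ

theorem subset_sUnion_of_mem {s α : ZFSet} (hα : α ∈ s) : α ⊆ ⋃₀ s :=
  fun _ hx => mem_sUnion_of_mem hx hα

theorem IsOrd.sUnion {s : ZFSet} (hs : ∀ α ∈ s, α.IsOrd) : (⋃₀ s).IsOrd := by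
  refine ⟨IsTransitive.sUnion' fun α hα => (hs α hα).1, fun y hy => ?_⟩
  obtain ⟨α, hα, hyα⟩ := mem_sUnion.1 hy
  exact (hs α hα).2 y hyα

theorem PlOrd.mem_of_relpl {α β γ : ZFSet} (hα : α.PlOrd) (hβ : β ∈ α) (hγβ : γ ⊆ β)
    (hγ : α.relpl γ) : γ ∈ α :=
  (hα.2 β hβ γ hγβ hγ).1

theorem PlOrd.mem_of_relpl_of_mem {α β γ δ : ZFSet} (hα : α.PlOrd) (hδ : δ ∈ α) (hβδ : β ∈ δ)
    (hγβ : γ ⊆ β) (hγ : α.relpl γ) : γ ∈ δ :=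
  (hα.2 β (hα.1.1 δ hδ hβδ) γ hγβ hγ).2 δ hδ hβδ

end ZFSet

theorem sUnion_plOrd (s : ZFSet) (hs : ∀ α ∈ s, ZFSet.PlOrd α) :
    ZFSet.PlOrd (ZFSet.sUnion s) := by
  refine ⟨ZFSet.IsOrd.sUnion fun α hα => (hs α hα).1,
    fun β hβ γ hγβ hγ => ⟨?_, fun δ hδ hβδ => ?_⟩⟩
  · obtain ⟨α, hα, hβα⟩ := ZFSet.mem_sUnion.1 hβ
    exact ZFSet.subset_sUnion_of_mem hα <|
      (hs α hα).mem_of_relpl hβα hγβ (hγ.mono (ZFSet.subset_sUnion_of_mem hα))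
  · obtain ⟨α, hα, hδα⟩ := ZFSet.mem_sUnion.1 hδ
    exact (hs α hα).mem_of_relpl_of_mem hδα hβδ hγβ (hγ.mono (ZFSet.subset_sUnion_of_mem hα))
end

section
/- Every subset of the ordinal 1 = {∅} is a plump ordinal; consequently the plump successor of 1 equals the full powerset of 1. -/
/-- The plump successor of `α`: the set of all plump ordinals that are subsets of `α`. -/
noncomputable def ZFSet.plumpSucc (α : ZFSet) : ZFSet :=
  (ZFSet.powerset α).sep ZFSet.PlOrd

lemma aux_plOrd (β : ZFSet) (hβ : β ⊆ ({∅} : ZFSet)) : β.PlOrd := by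
  have hmem : ∀ x ∈ β, x = ∅ := by
    intro x hx
    simpa using hβ hx
  refine ⟨⟨?_, ?_⟩, ?_⟩
  · intro x hx
    rw [hmem x hx]
    intro y hy
    simp at hy
  · intro y hy
    rw [hmem y hy]
    intro x hx y hy
    simp at hx
  · intro b hb γ hγ _
    have hb0 := hmem b hb
    have hγ0 : γ = ∅ := by
      apply ZFSet.ext
      intro z
      constructor
      · intro hz
        have := hγ hz
        rw [hb0] at this
        simp at this
      · intro hz; simp at hz
    constructor
    · rw [hγ0, ← hb0]; exact hb
    · intro δ hδ hbδ
      rw [hmem δ hδ] at hbδ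
      simp at hbδ

/-- Every subset of `1 = {∅}` is a plump ordinal, hence the plump successor of `1`
is the full powerset of `1`. -/
theorem subset_one_plOrd :
    (∀ β : ZFSet, β ⊆ ({∅} : ZFSet) → β.PlOrd) ∧
      ZFSet.plumpSucc ({∅} : ZFSet) = ZFSet.powerset ({∅} : ZFSet) := by
  refine ⟨aux_plOrd, ?_⟩
  apply ZFSet.ext
  intro x
  simp only [ZFSet.plumpSucc, ZFSet.mem_sep, ZFSet.mem_powerset]
  exact ⟨fun h => h.1, fun h => ⟨h, aux_plOrd x h⟩⟩
end

section
/- For plump ordinals α, β, γ, if α + β ⊆ α + γ then β ⊆ γ; in particular, for fixed plump α, the map β ↦ α + β is injective on plump ordinals. -/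
/-- `add` is plump ordinal addition: `α + β = α ∪ ⋃_{γ ∈ β} (α + γ)⁺ᵖˡ`. -/
def IsPlAdd (add : ZFSet → ZFSet → ZFSet) : Prop :=
  ∀ α β x : ZFSet, x ∈ add α β ↔ x ∈ α ∨ ∃ γ ∈ β, x ∈ (add α γ).plumpSucc

/-- `mul` is plump ordinal multiplication: `α · β = ⋃_{δ ∈ β} (α · δ + α)`. -/
def IsPlMul (add mul : ZFSet → ZFSet → ZFSet) : Prop :=
  ∀ α β x : ZFSet, x ∈ mul α β ↔ ∃ δ ∈ β, x ∈ add (mul α δ) α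

open ZFSet

lemma mem_plumpSucc' {a x : ZFSet} : x ∈ a.plumpSucc ↔ x ⊆ a ∧ x.PlOrd := by
  simp [ZFSet.plumpSucc, ZFSet.mem_sep, ZFSet.mem_powerset]

lemma combined' : ∀ o : Ordinal, ∀ x : ZFSet, x.rank = o →
    (∀ α : ZFSet, α.PlOrd → x ∈ α → x.PlOrd) ∧
    (x.PlOrd → ∀ δ : ZFSet, δ.PlOrd → δ.relpl x) := by
  intro o
  induction o using Ordinal.induction with
  | h o IH =>
  intro x hx
  subst hx
  constructor
  · intro α hα hxα
    refine ⟨⟨hα.1.2 x hxα, fun y hy => hα.1.2 y (hα.1.1 x hxα hy)⟩, ?_⟩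
    intro x' hx' γ hγ hrel
    have hx'α : x' ∈ α := hα.1.1 x hxα hx'
    have hrelαγ : α.relpl γ := by
      intro y hy g hg hgy
      have hyx' : y ∈ x' := hγ hy
      have hyx : y ∈ x := hα.1.2 x hxα x' hx' hyx'
      have hyα : α.IsTransitive := hα.1.1
      have hyinα : y ∈ α := hyα x hxα hyx
      have hrg : g.rank < x.rank :=
        lt_of_le_of_lt (ZFSet.rank_mono hgy) (ZFSet.rank_lt_of_mem hyx)
      have hgPl : g.PlOrd := (IH g.rank hrg g rfl).1 α hα hg
      have hrelg : α.relpl g := (IH g.rank hrg g rfl).2 hgPl α hα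
      have := hα.2 y hyinα g hgy hrelg
      have hgx : g ∈ x := this.2 x hxα hyx
      exact hrel y hy g hgx hgy
    have hmain := hα.2 x' hx'α γ hγ hrelαγ
    exact ⟨hmain.2 x hxα hx', fun d hd hx'd => hmain.2 d (hα.1.1 x hxα hd) hx'd⟩
  · intro hxPl δ hδ z hz f hf hfz
    have hrf : f.rank < x.rank :=
      lt_of_le_of_lt (ZFSet.rank_mono hfz) (ZFSet.rank_lt_of_mem hz)
    have hfPl : f.PlOrd := (IH f.rank hrf f rfl).1 δ hδ hf
    have hrelxf : x.relpl f := (IH f.rank hrf f rfl).2 hfPl x hxPl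
    exact (hxPl.2 z hz f hfz hrelxf).1

/-- Elements of plump ordinals are plump ordinals. -/
lemma plOrd_mem' {α x : ZFSet} (hα : α.PlOrd) (h : x ∈ α) : x.PlOrd :=
  (combined' x.rank x rfl).1 α hα h

/-- Any plump ordinal is relatively plump w.r.t. any plump ordinal. -/
lemma relpl_all' {x δ : ZFSet} (hx : x.PlOrd) (hδ : δ.PlOrd) : δ.relpl x :=
  (combined' x.rank x rfl).2 hx δ hδ

/-- Lemma D: subsets that are relatively plump are plump. -/
lemma plOrd_of_relpl' {b c : ZFSet} (hb : b.PlOrd) (hcb : c ⊆ b) (hrel : b.relpl c) :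
    c.PlOrd := by
  have hctrans : c.IsTransitive := by
    intro y hy z hz
    have hyb : y ∈ b := hcb hy
    have hzb : z ∈ b := hb.1.1 y hyb hz
    have hzy : z ⊆ y := hb.1.2 y hyb z hz
    exact hrel y hy z hzb hzy
  refine ⟨⟨hctrans, fun y hy => hb.1.2 y (hcb hy)⟩, ?_⟩
  intro x hx γ hγ hcγ
  have hxb : x ∈ b := hcb hx
  have hbγ : b.relpl γ := by
    intro y hy e he hey
    have hyx : y ∈ x := hγ hy
    have hyc : y ∈ c := hctrans x hx hyx
    have hec : e ∈ c := hrel y hyc e he hey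
    exact hcγ y hy e hec hey
  have hmain := hb.2 x hxb γ hγ hbγ
  have hγb : γ ∈ b := hmain.1
  exact ⟨hrel x hx γ hγb hγ, fun d hd hxd => hmain.2 d (hcb hd) hxd⟩
section PlAddLemmas

variable {add : ZFSet → ZFSet → ZFSet}

lemma subset_add' (hadd : IsPlAdd add) {α β : ZFSet} : α ⊆ add α β :=
  fun x hx => (hadd α β x).2 (Or.inl hx)

lemma add_mono' (hadd : IsPlAdd add) {α β γ : ZFSet} (h : β ⊆ γ) : add α β ⊆ add α γ := by
  intro x hx
  rcases (hadd α β x).1 hx with h1 | ⟨d, hd, hmem⟩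
  · exact (hadd α γ x).2 (Or.inl h1)
  · exact (hadd α γ x).2 (Or.inr ⟨d, h hd, hmem⟩)

lemma mem_add_plOrd' (hadd : IsPlAdd add) {α β x : ZFSet} (hα : α.PlOrd) (hx : x ∈ add α β) : x.PlOrd := by
  rcases (hadd α β x).1 hx with h1 | ⟨d, _, hmem⟩
  · exact plOrd_mem' hα h1
  · exact (mem_plumpSucc'.1 hmem).2

lemma plOrd_add' (hadd : IsPlAdd add) {α β : ZFSet} (hα : α.PlOrd) (hβ : β.PlOrd) : (add α β).PlOrd := by
  have htrans : (add α β).IsTransitive := by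
    intro x hx
    rcases (hadd α β x).1 hx with h1 | ⟨d, hd, hmem⟩
    · exact (hα.1.1 x h1).trans (subset_add' hadd)
    · exact (mem_plumpSucc'.1 hmem).1.trans
        (add_mono' hadd (hβ.1.1 d hd))
  refine ⟨⟨htrans, fun y hy => (mem_add_plOrd' hadd hα hy).1.1⟩, ?_⟩
  intro b hb c hc hrel
  have hbPl : b.PlOrd := mem_add_plOrd' hadd hα hb
  have hbsub : b ⊆ add α β := htrans b hb
  have hbrelc : b.relpl c := fun y hy e he hey => hrel y hy e (hbsub he) hey
  have hcPl : c.PlOrd := plOrd_of_relpl' hbPl hc hbrelc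
  have hcmem : c ∈ add α β := by
    rcases (hadd α β b).1 hb with h1 | ⟨d, hd, hmem⟩
    · -- b ∈ α : use α's plumpness
      have hrelαc : α.relpl c := fun y hy e he hey =>
        hrel y hy e (subset_add' hadd he) hey
      exact subset_add' hadd (hα.2 b h1 c hc hrelαc).1
    · -- b ∈ plumpSucc (add α d)
      have hbsub' : b ⊆ add α d := (mem_plumpSucc'.1 hmem).1
      exact (hadd α β c).2 (Or.inr ⟨d, hd, mem_plumpSucc'.2 ⟨hc.trans hbsub', hcPl⟩⟩)
  refine ⟨hcmem, ?_⟩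
  intro d hd hbd
  have hdPl : d.PlOrd := mem_add_plOrd' hadd hα hd
  exact (hdPl.2 b hbd c hc (relpl_all' hcPl hdPl)).1

lemma cancel' (hadd : IsPlAdd add) {α : ZFSet} (hα : α.PlOrd) :
    ∀ o : Ordinal, ∀ β : ZFSet, β.rank = o → β.PlOrd →
      ∀ γ : ZFSet, γ.PlOrd → add α β ⊆ add α γ → β ⊆ γ := by
  intro o
  induction o using Ordinal.induction with
  | h o IH =>
  intro β hβr hβ γ hγ hsub δ hδ
  subst hβr
  have hδPl : δ.PlOrd := plOrd_mem' hβ hδ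
  have haddδ : (add α δ).PlOrd := plOrd_add' hadd hα hδPl
  have hmem : add α δ ∈ add α β :=
    (hadd α β (add α δ)).2 (Or.inr ⟨δ, hδ, mem_plumpSucc'.2 ⟨subset_rfl, haddδ⟩⟩)
  have hmemγ : add α δ ∈ add α γ := hsub hmem
  rcases (hadd α γ (add α δ)).1 hmemγ with h1 | ⟨ε, hε, hmem'⟩
  · exact absurd (subset_add' hadd h1) (ZFSet.mem_irrefl _)
  · have hεPl : ε.PlOrd := plOrd_mem' hγ hε
    have hsub' : add α δ ⊆ add α ε := (mem_plumpSucc'.1 hmem').1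
    have hδε : δ ⊆ ε :=
      IH δ.rank (ZFSet.rank_lt_of_mem hδ) δ rfl hδPl ε hεPl hsub'
    exact (hγ.2 ε hε δ hδε (relpl_all' hδPl hγ)).1

end PlAddLemmas

theorem plAdd_subset_cancel (add : ZFSet → ZFSet → ZFSet) (hadd : IsPlAdd add)
    (α β γ : ZFSet) (hα : α.PlOrd) (hβ : β.PlOrd) (hγ : γ.PlOrd)
    (h : add α β ⊆ add α γ) :
    β ⊆ γ ∧ ∀ β' γ' : ZFSet, β'.PlOrd → γ'.PlOrd → add α β' = add α γ' → β' = γ' := by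
  refine ⟨cancel' hadd hα β.rank β rfl hβ γ hγ h, ?_⟩
  intro β' γ' hβ' hγ' heq
  apply ZFSet.ext
  intro x
  constructor
  · intro hx
    exact cancel' hadd hα β'.rank β' rfl hβ' γ' hγ' (heq ▸ subset_rfl) hx
  · intro hx
    exact cancel' hadd hα γ'.rank γ' rfl hγ' β' hβ' (heq ▸ subset_rfl) hx
end

section
/- Any pairwise incomparable function into plump ordinals can be encoded by a single plump ordinal: if α, β are plump ordinals and f : s → β with s ⊆ α satisfies (f(γ′) ⊆ f(γ) → γ = γ′) for all γ, γ′ ∈ s, then with σ = ⋃_{γ ∈ s} (α·f(γ) + γ)⁺ᵖˡ, one has for all γ ∈ α and δ ∈ β: (γ ∈ s ∧ f(γ) = δ) iff there exists τ ∈ σ with τ = α·δ + γ and τ is ⊆-maximal in σ. -/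
namespace PlumpAux

open ZFSet

lemma ord_of_mem {x y : ZFSet} (hx : x.IsOrd) (h : y ∈ x) : y.IsOrd :=
  ⟨hx.2 y h, fun z hz => hx.2 z (hx.1 y h hz)⟩

lemma ord_tri (x : ZFSet) : ∀ y : ZFSet, x.IsOrd → y.IsOrd → x ∈ y ∨ x = y ∨ y ∈ x := by
  induction x using ZFSet.inductionOn with
  | _ x ihx =>
  intro y
  induction y using ZFSet.inductionOn with
  | _ y ihy =>
  intro hx hy
  by_cases hxy : x ∈ y
  · exact Or.inl hxy
  by_cases hyx : y ∈ x
  · exact Or.inr (Or.inr hyx)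
  refine Or.inr (Or.inl (ZFSet.ext fun z => ⟨?_, ?_⟩))
  · intro hz
    rcases ihx z hz y (ord_of_mem hx hz) hy with h | h | h
    · exact h
    · exact absurd (h ▸ hz) hyx
    · exact absurd (hx.1 z hz h) hyx
  · intro hz
    rcases ihy z hz hx (ord_of_mem hy hz) with h | h | h
    · exact absurd (hy.1 z hz h) hxy
    · exact absurd (h ▸ hz) hxy
    · exact h

lemma ord_subset_iff {x y : ZFSet} (hx : x.IsOrd) (hy : y.IsOrd) :
    x ⊆ y ↔ x ∈ y ∨ x = y := by
  constructor
  · intro h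
    rcases ord_tri x y hx hy with h1 | h1 | h1
    · exact Or.inl h1
    · exact Or.inr h1
    · exact absurd (h h1) (ZFSet.mem_irrefl y)
  · rintro (h | rfl)
    · exact hy.1 _ h
    · exact subset_rfl

lemma plOrd_of_ord {α : ZFSet} (h : α.IsOrd) : α.PlOrd := by
  refine ⟨h, ?_⟩
  intro β hβ γ hγβ hrel
  have hβo : β.IsOrd := ord_of_mem h hβ
  have hγo : γ.IsOrd := by
    constructor
    · intro d hd e he
      have hdα : d ∈ α := h.1 β hβ (hγβ hd)
      have heα : e ∈ α := h.1 d hdα he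
      exact hrel d hd e heα ((ord_of_mem h hdα).1 e he)
    · intro z hz
      exact (ord_of_mem h (h.1 β hβ (hγβ hz))).1
  have hmem : γ ∈ β ∨ γ = β := (ord_subset_iff hγo hβo).1 hγβ
  constructor
  · rcases hmem with h1 | rfl
    · exact h.1 β hβ h1
    · exact hβ
  · intro δ hδ hβδ
    have hδo : δ.IsOrd := ord_of_mem h hδ
    rcases hmem with h1 | rfl
    · exact hδo.1 β hβδ h1
    · exact hβδ

lemma mem_plumpSucc {α : ZFSet} (hα : α.IsOrd) (x : ZFSet) :
    x ∈ α.plumpSucc ↔ x ∈ α ∨ x = α := by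
  simp only [ZFSet.plumpSucc, ZFSet.mem_sep, ZFSet.mem_powerset]
  constructor
  · rintro ⟨h1, h2⟩
    exact (ord_subset_iff h2.1 hα).1 h1
  · rintro (h | rfl)
    · exact ⟨hα.1 _ h, plOrd_of_ord (ord_of_mem hα h)⟩
    · exact ⟨subset_rfl, plOrd_of_ord hα⟩

variable {add mul : ZFSet → ZFSet → ZFSet}

lemma add_isOrd (hadd : IsPlAdd add) {α : ZFSet} (hα : α.IsOrd) :
    ∀ β : ZFSet, β.IsOrd → (add α β).IsOrd := by
  intro β
  induction β using ZFSet.inductionOn with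
  | _ β ih =>
  intro hβ
  have key : ∀ γ ∈ β, add α γ ⊆ add α β := by
    intro γ hγ z hz
    have ho := ih γ hγ (ord_of_mem hβ hγ)
    exact (hadd α β z).2 (Or.inr ⟨γ, hγ, (mem_plumpSucc ho z).2 (Or.inl hz)⟩)
  constructor
  · intro x hx
    rcases (hadd α β x).1 hx with h | ⟨γ, hγ, h⟩
    · intro z hz
      exact (hadd α β z).2 (Or.inl (hα.1 _ h hz))
    · have ho := ih γ hγ (ord_of_mem hβ hγ)
      rcases (mem_plumpSucc ho x).1 h with h' | rfl
      · intro z hz; exact key γ hγ (ho.1 _ h' hz)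
      · intro z hz; exact key γ hγ hz
  · intro x hx
    rcases (hadd α β x).1 hx with h | ⟨γ, hγ, h⟩
    · exact (ord_of_mem hα h).1
    · have ho := ih γ hγ (ord_of_mem hβ hγ)
      rcases (mem_plumpSucc ho x).1 h with h' | rfl
      · exact (ord_of_mem ho h').1
      · exact ho.1

lemma self_subset_add (hadd : IsPlAdd add) (α β : ZFSet) : α ⊆ add α β :=
  fun x hx => (hadd α β x).2 (Or.inl hx)

lemma add_mem_add (hadd : IsPlAdd add) {α γ β : ZFSet} (hγo : (add α γ).IsOrd)
    (h : γ ∈ β) : add α γ ∈ add α β :=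
  (hadd α β _).2 (Or.inr ⟨γ, h, (mem_plumpSucc hγo _).2 (Or.inr rfl)⟩)

lemma add_right_cancel (hadd : IsPlAdd add) {α γ γ' : ZFSet} (hα : α.IsOrd)
    (hγ : γ.IsOrd) (hγ' : γ'.IsOrd) (h : add α γ = add α γ') : γ = γ' := by
  rcases ord_tri γ γ' hγ hγ' with h1 | h1 | h1
  · exact absurd (h ▸ add_mem_add hadd (add_isOrd hadd hα γ hγ) h1)
      (ZFSet.mem_irrefl _)
  · exact h1
  · exact absurd (h ▸ add_mem_add hadd (add_isOrd hadd hα γ' hγ') h1)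
      (ZFSet.mem_irrefl _)

lemma mul_isOrd (hadd : IsPlAdd add) (hmul : IsPlMul add mul) {α : ZFSet}
    (hα : α.IsOrd) : ∀ β : ZFSet, β.IsOrd → (mul α β).IsOrd := by
  intro β
  induction β using ZFSet.inductionOn with
  | _ β ih =>
  intro hβ
  have key : ∀ δ ∈ β, add (mul α δ) α ⊆ mul α β := by
    intro δ hδ z hz
    exact (hmul α β z).2 ⟨δ, hδ, hz⟩
  constructor
  · intro x hx
    rcases (hmul α β x).1 hx with ⟨δ, hδ, h⟩
    have ho : (add (mul α δ) α).IsOrd :=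
      add_isOrd hadd (ih δ hδ (ord_of_mem hβ hδ)) α hα
    intro z hz
    exact key δ hδ (ho.1 x h hz)
  · intro x hx
    rcases (hmul α β x).1 hx with ⟨δ, hδ, h⟩
    have ho : (add (mul α δ) α).IsOrd :=
      add_isOrd hadd (ih δ hδ (ord_of_mem hβ hδ)) α hα
    exact (ord_of_mem ho h).1

/-- Key comparison: `α·δ + γ ⊆ α·δ' + γ'` with `γ, γ' ∈ α` forces `δ ⊆ δ'`. -/
lemma key_sub (hadd : IsPlAdd add) (hmul : IsPlMul add mul) {α δ δ' γ γ' : ZFSet}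
    (hα : α.IsOrd) (hδ : δ.IsOrd) (hδ' : δ'.IsOrd) (hγ' : γ' ∈ α)
    (h : add (mul α δ) γ ⊆ add (mul α δ') γ') : δ ⊆ δ' := by
  rcases ord_tri δ δ' hδ hδ' with h1 | h1 | h1
  · exact hδ'.1 δ h1
  · exact h1 ▸ subset_rfl
  · exfalso
    have hm' : (mul α δ').IsOrd := mul_isOrd hadd hmul hα δ' hδ'
    have h2 : add (mul α δ') γ' ∈ add (mul α δ') α :=
      add_mem_add hadd (add_isOrd hadd hm' γ' (ord_of_mem hα hγ')) hγ'
    have h3 : add (mul α δ') γ' ∈ mul α δ := (hmul α δ _).2 ⟨δ', h1, h2⟩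
    have h4 : add (mul α δ') γ' ∈ add (mul α δ) γ :=
      self_subset_add hadd (mul α δ) γ h3
    exact ZFSet.mem_irrefl _ (h h4)

end PlumpAux

open PlumpAux in
/-- A pairwise incomparable function into plump ordinals can be encoded by the single
plump ordinal `σ = ⋃_{γ ∈ s} (α·f(γ) + γ)⁺ᵖˡ`. -/
theorem incomparable_function_coding (add mul : ZFSet → ZFSet → ZFSet)
    (hadd : IsPlAdd add) (hmul : IsPlMul add mul)
    (α β s : ZFSet) (hα : α.PlOrd) (hβ : β.PlOrd) (hs : s ⊆ α)
    (f : ZFSet → ZFSet) (hf : ∀ γ ∈ s, f γ ∈ β)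
    (hincomp : ∀ γ ∈ s, ∀ γ' ∈ s, f γ' ⊆ f γ → γ = γ')
    (σ : ZFSet)
    (hσ : ∀ x : ZFSet, x ∈ σ ↔ ∃ γ ∈ s, x ∈ (add (mul α (f γ)) γ).plumpSucc) :
    ∀ γ ∈ α, ∀ δ ∈ β,
      (γ ∈ s ∧ f γ = δ) ↔
        ∃ τ ∈ σ, τ = add (mul α δ) γ ∧ ∀ τ' ∈ σ, τ ⊆ τ' → τ = τ' := by
  have hαo : α.IsOrd := hα.1
  have hβo : β.IsOrd := hβ.1
  -- ordinality of the coding terms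
  have hT : ∀ x ∈ s, (add (mul α (f x)) x).IsOrd := fun x hx =>
    add_isOrd hadd (mul_isOrd hadd hmul hαo (f x) (ord_of_mem hβo (hf x hx))) x
      (ord_of_mem hαo (hs hx))
  intro γ hγ δ hδ
  have hδo : δ.IsOrd := ord_of_mem hβo hδ
  have hγo : γ.IsOrd := ord_of_mem hαo hγ
  constructor
  · rintro ⟨hγs, rfl⟩
    refine ⟨add (mul α (f γ)) γ, ?_, rfl, ?_⟩
    · exact (hσ _).2 ⟨γ, hγs, (mem_plumpSucc (hT γ hγs) _).2 (Or.inr rfl)⟩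
    · intro τ' hτ' hsub
      rcases (hσ τ').1 hτ' with ⟨γ'', hγ''s, hmem⟩
      have hτ'sub : τ' ⊆ add (mul α (f γ'')) γ'' := by
        rcases (mem_plumpSucc (hT γ'' hγ''s) τ').1 hmem with h | rfl
        · exact (hT γ'' hγ''s).1 τ' h
        · exact subset_rfl
      have hff : f γ ⊆ f γ'' :=
        key_sub hadd hmul hαo (ord_of_mem hβo (hf γ hγs))
          (ord_of_mem hβo (hf γ'' hγ''s)) (hs hγ''s) (hsub.trans hτ'sub)
      have : γ'' = γ := hincomp γ'' hγ''s γ hγs hff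
      subst this
      exact subset_antisymm hsub hτ'sub
  · rintro ⟨τ, hτσ, rfl, hmax⟩
    rcases (hσ _).1 hτσ with ⟨γ'', hγ''s, hmem⟩
    have hTmem : add (mul α (f γ'')) γ'' ∈ σ :=
      (hσ _).2 ⟨γ'', hγ''s, (mem_plumpSucc (hT γ'' hγ''s) _).2 (Or.inr rfl)⟩
    have hτsub : add (mul α δ) γ ⊆ add (mul α (f γ'')) γ'' := by
      rcases (mem_plumpSucc (hT γ'' hγ''s) _).1 hmem with h | h
      · exact (hT γ'' hγ''s).1 _ h
      · exact h ▸ subset_rfl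
    have heq : add (mul α δ) γ = add (mul α (f γ'')) γ'' :=
      hmax _ hTmem hτsub
    have hfo : (f γ'').IsOrd := ord_of_mem hβo (hf γ'' hγ''s)
    have hδf : δ = f γ'' := by
      apply subset_antisymm
      · exact key_sub hadd hmul hαo hδo hfo (hs hγ''s) (fun _ hx => heq ▸ hx)
      · exact key_sub hadd hmul hαo hfo hδo hγ (fun _ hx => heq.symm ▸ hx)
    have hγeq : γ = γ'' := by
      apply add_right_cancel hadd (mul_isOrd hadd hmul hαo δ hδo) hγo
        (ord_of_mem hαo (hs hγ''s))
      rw [heq, hδf]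
    rw [hγeq, hδf]
    exact ⟨hγ''s, rfl⟩
end
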